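/- For every even integer L ≥ 2, every β ≥ 0 and every ε with 0 < ε < 1/4, the restricted partition function Z^{ord}(β,ε) = ∫_{\{every bond ε-ordered\}} exp(−β H_ε(φ)) dμ(φ) satisfies Z^{ord}(β,ε) ≤ exp(2βL²)·ε^{L²−1}, and consequently (Z^{ord}(β,ε) / Z_Λ(β,ε))^{1/(2L²)} ≤ exp(β) · ε^{(L²−1)/(2L²)} · (1 − 4ε)^{−1/4}. -/

import Mathlib

open MeasureTheory Real

/-- The site space: the discrete torus of side `L`. -/
abbrev Torus (L : ℕ) := ZMod L × ZMod L

/-- A configuration of the toy model: one circle-valued spin per site. -/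
abbrev Config (L : ℕ) := Torus L → AddCircle (1 : ℝ)

/-- The two unit coordinate vectors `e₁ = (1,0)` and `e₂ = (0,1)`. -/
def coordVec (L : ℕ) : Fin 2 → Torus L
  | 0 => (1, 0)
  | 1 => (0, 1)

/-- The product of normalized Haar measures on the spins. -/
noncomputable def toyMeasure (L : ℕ) [NeZero L] : Measure (Config L) :=
  Measure.pi fun _ => (AddCircle.haarAddCircle : Measure (AddCircle (1 : ℝ)))

/-- A bond `(x, x + eᵢ)` of the configuration `φ` is `ε`-ordered when
`‖φ x - φ (x + eᵢ)‖ ≤ ε/2`, where `‖·‖` is the quotient norm on `ℝ/ℤ`. -/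
def IsOrderedBond (L : ℕ) [NeZero L] (ε : ℝ) (φ : Config L) (x : Torus L) (i : Fin 2) : Prop :=
  ‖φ x - φ (x + coordVec L i)‖ ≤ ε / 2

noncomputable instance (L : ℕ) [NeZero L] (ε : ℝ) (φ : Config L) (x : Torus L) (i : Fin 2) :
    Decidable (IsOrderedBond L ε φ x i) :=
  Real.decidableLE _ _

/-- The toy Hamiltonian: minus the number of `ε`-ordered bonds. -/
noncomputable def toyH (L : ℕ) [NeZero L] (ε : ℝ) (φ : Config L) : ℝ :=
  -(∑ x : Torus L, ∑ i : Fin 2, if IsOrderedBond L ε φ x i then (1 : ℝ) else 0)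

/-- The toy-model partition function. -/
noncomputable def toyZ (L : ℕ) [NeZero L] (β ε : ℝ) : ℝ :=
  ∫ φ, Real.exp (-β * toyH L ε φ) ∂(toyMeasure L)

/-- The ordered-restricted partition function `Z^{ord}`: the integral of the
Boltzmann weight over the configurations all of whose bonds are `ε`-ordered. -/
noncomputable def toyZord (L : ℕ) [NeZero L] (β ε : ℝ) : ℝ :=
  ∫ φ in {φ : Config L | ∀ x : Torus L, ∀ i : Fin 2, IsOrderedBond L ε φ x i},
    Real.exp (-β * toyH L ε φ) ∂(toyMeasure L)

/-!
If every bond is `ε`-ordered, then in the spanning tree of the torus that joins each site `x ≠ 0`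
to `x - e₁` (to `x - e₂` when `x₁ = 0`), every spin lies within `ε/2` of its parent's spin.
Integrating the spins out in decreasing lexicographic order, each of the `L² - 1` non-root sites
contributes a factor `ε` (the Haar measure of an arc of length `ε`), so the all-ordered event has
measure at most `ε^(L²-1)`. The Boltzmann weight lies between `1` and `exp (2βL²)`, which gives the
bound on `Z^{ord}` and `Z ≥ 1`; the ratio bound follows since `(1 - 4ε)^(-1/4) ≥ 1`.
-/

open scoped ENNReal

namespace MeasureTheory

variable {ι α : Type*} [MeasurableSpace α] {R : α → α → Prop}

lemma measurableSet_setOf_rel_apply (hR : MeasurableSet {q : α × α | R q.1 q.2}) (a b : ι) :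
    MeasurableSet {φ : ι → α | R (φ a) (φ b)} :=
  hR.preimage (f := fun φ : ι → α => (φ a, φ b)) (by fun_prop)

lemma measurableSet_setOf_forall_rel_apply (hR : MeasurableSet {q : α × α | R q.1 q.2})
    (p : ι → ι) (s : Finset ι) :
    MeasurableSet {φ : ι → α | ∀ x ∈ s, R (φ x) (φ (p x))} := by
  simpa only [Set.ofPred_forall] using
    s.measurableSet_biInter fun x _ => measurableSet_setOf_rel_apply hR x (p x)

variable [Fintype ι] [DecidableEq ι] {ν : Measure α} [IsProbabilityMeasure ν] {δ : ℝ≥0∞}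

lemma measure_pi_inter_rel_le (hR : MeasurableSet {q : α × α | R q.1 q.2})
    (hν : ∀ c, ν {t | R t c} ≤ δ) {A : Set (ι → α)} (hA : MeasurableSet A) {a b : ι}
    (hab : a ≠ b) (hAa : ∀ φ t, Function.update φ a t ∈ A ↔ φ ∈ A) :
    Measure.pi (fun _ => ν) (A ∩ {φ | R (φ a) (φ b)}) ≤ δ * Measure.pi (fun _ => ν) A := by
  have hB := measurableSet_setOf_rel_apply hR a b
  have hRc (c : α) : MeasurableSet {t | R t c} := measurable_prodMk_right hR
  rw [← lintegral_indicator_one (hA.inter hB), ← lintegral_indicator_one hA,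
    ← lintegral_const_mul _ (measurable_one.indicator hA)]
  refine lintegral_le_of_lmarginal_le {a} (measurable_one.indicator (hA.inter hB))
    (measurable_one.indicator hA |>.const_mul δ) fun φ => ?_
  simp only [lmarginal_singleton]
  calc ∫⁻ t, (A ∩ {φ | R (φ a) (φ b)}).indicator 1 (Function.update φ a t) ∂ν
      ≤ ∫⁻ t, A.indicator 1 φ * {t | R t (φ b)}.indicator 1 t ∂ν := by
        refine lintegral_mono fun t => ?_
        by_cases h : Function.update φ a t ∈ A ∩ {φ | R (φ a) (φ b)}
        · have hφ : φ ∈ A := (hAa φ t).1 h.1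
          have ht : t ∈ {t | R t (φ b)} := by
            simpa [Function.update_of_ne hab.symm] using h.2
          simp [Set.indicator_of_mem h, Set.indicator_of_mem hφ, Set.indicator_of_mem ht]
        · simp [Set.indicator_of_notMem h]
    _ = A.indicator 1 φ * ν {t | R t (φ b)} := by
        rw [lintegral_const_mul _ (measurable_one.indicator (hRc _)),
          lintegral_indicator_one (hRc _)]
    _ ≤ A.indicator 1 φ * δ := by gcongr; exact hν _
    _ = ∫⁻ t, δ * A.indicator 1 (Function.update φ a t) ∂ν := by
        classical
        simp only [Set.indicator_apply, hAa]
        simp [mul_comm]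

theorem measure_pi_setOf_forall_rel_parent_le {β : Type*} [LinearOrder β]
    (hR : MeasurableSet {q : α × α | R q.1 q.2}) (hν : ∀ c, ν {t | R t c} ≤ δ)
    (rank : ι → β) (p : ι → ι) (s : Finset ι) (hp : ∀ x ∈ s, rank (p x) < rank x) :
    Measure.pi (fun _ => ν) {φ | ∀ x ∈ s, R (φ x) (φ (p x))} ≤ δ ^ s.card := by
  induction s using Finset.induction_on_max_value rank with
  | empty => simp
  | insert a s has hmax ih =>
    -- `a` has maximal rank, so no other constraint involves the spin at `a`:
    -- integrating it out costs exactly one factor `δ`.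
    have hs : ∀ x ∈ s, rank (p x) < rank x := fun x hx => hp x (Finset.mem_insert_of_mem hx)
    have hsplit : {φ : ι → α | ∀ x ∈ insert a s, R (φ x) (φ (p x))} =
        {φ | ∀ x ∈ s, R (φ x) (φ (p x))} ∩ {φ | R (φ a) (φ (p a))} := by
      ext φ; simp [and_comm]
    have hpa : a ≠ p a := ne_of_apply_ne rank (hp a (Finset.mem_insert_self a s)).ne'
    have hfree : ∀ φ t, Function.update φ a t ∈ {φ : ι → α | ∀ x ∈ s, R (φ x) (φ (p x))} ↔
        φ ∈ {φ : ι → α | ∀ x ∈ s, R (φ x) (φ (p x))} := by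
      intro φ t
      refine forall₂_congr fun x hx => ?_
      have hxa : x ≠ a := ne_of_mem_of_not_mem hx has
      have hpxa : p x ≠ a := ne_of_apply_ne rank ((hs x hx).trans_le (hmax x hx)).ne
      rw [Function.update_of_ne hxa, Function.update_of_ne hpxa]
    rw [hsplit, Finset.card_insert_of_notMem has, pow_succ']
    calc _ ≤ δ * Measure.pi (fun _ => ν) {φ : ι → α | ∀ x ∈ s, R (φ x) (φ (p x))} :=
          measure_pi_inter_rel_le hR hν (measurableSet_setOf_forall_rel_apply hR p s) hpa hfree
      _ ≤ δ * δ ^ s.card := by gcongr; exact ih hs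

end MeasureTheory

lemma AddCircle.haarAddCircle_closedBall_le {T : ℝ} [Fact (0 < T)] (c : AddCircle T) (r : ℝ) :
    AddCircle.haarAddCircle (Metric.closedBall c r) ≤ ENNReal.ofReal (2 * r / T) := by
  have hT : (0 : ℝ) < T := Fact.out
  have hvol := AddCircle.volume_closedBall (T := T) (x := c) r
  rw [AddCircle.volume_eq_smul_haarAddCircle, Measure.smul_apply, smul_eq_mul] at hvol
  rw [ENNReal.ofReal_div_of_pos hT, ENNReal.le_div_iff_mul_le (by simp [hT]) (by simp),
    mul_comm, hvol]
  gcongr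
  exact min_le_right _ _

lemma measurableSet_setOf_norm_sub_le {G : Type*} [SeminormedAddCommGroup G] [MeasurableSpace G]
    [BorelSpace G] [SecondCountableTopology G] (r : ℝ) :
    MeasurableSet {q : G × G | ‖q.1 - q.2‖ ≤ r} :=
  measurableSet_le (by fun_prop) measurable_const

lemma ZMod.val_sub_one_add_one {n : ℕ} [NeZero n] {a : ZMod n} (ha : a ≠ 0) :
    (a - 1).val + 1 = a.val := by
  have : Fact (1 < n) :=
    ⟨by have := ZMod.nontrivial_iff.1 ⟨a, 0, ha⟩; have := NeZero.pos n; omega⟩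
  have ha' : 1 ≤ a.val := ZMod.val_pos.2 ha
  rw [ZMod.val_sub (by rwa [ZMod.val_one]), ZMod.val_one]
  omega

namespace Torus

variable {L : ℕ}

def lexPred (x : Torus L) : Torus L :=
  if x.1 = 0 then x - coordVec L 1 else x - coordVec L 0

def lexRank (x : Torus L) : ℕ :=
  L * x.2.val + x.1.val

lemma exists_lexPred_add_coordVec (x : Torus L) : ∃ i, lexPred x + coordVec L i = x := by
  unfold lexPred
  split_ifs
  exacts [⟨1, sub_add_cancel _ _⟩, ⟨0, sub_add_cancel _ _⟩]

lemma lexRank_lexPred_lt [NeZero L] {x : Torus L} (hx : x ≠ 0) :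
    lexRank (lexPred x) < lexRank x := by
  obtain ⟨a, b⟩ := x
  unfold lexPred lexRank
  by_cases ha : a = 0
  · subst ha
    have hb : b ≠ 0 := fun hb => hx (by rw [hb]; rfl)
    have := ZMod.val_sub_one_add_one hb
    simp only [if_true, coordVec, Prod.mk_sub_mk, sub_zero]
    nlinarith [NeZero.pos L]
  · have := ZMod.val_sub_one_add_one ha
    simp only [ha, if_false, coordVec, Prod.mk_sub_mk, sub_zero]
    omega

lemma card_erase_zero [NeZero L] : (Finset.univ.erase (0 : Torus L)).card = L ^ 2 - 1 := by
  rw [Finset.card_erase_of_mem (Finset.mem_univ _), Finset.card_univ, Fintype.card_prod,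
    ZMod.card, sq]

end Torus

instance (L : ℕ) [NeZero L] : IsProbabilityMeasure (toyMeasure L) := by
  unfold toyMeasure; infer_instance

section Hamiltonian

variable {L : ℕ} [NeZero L] (ε : ℝ)

lemma neg_toyH_nonneg (φ : Config L) : 0 ≤ -toyH L ε φ := by
  rw [toyH, neg_neg]
  positivity

lemma neg_toyH_le (φ : Config L) : -toyH L ε φ ≤ 2 * L ^ 2 := by
  rw [toyH, neg_neg]
  calc ∑ x : Torus L, ∑ i : Fin 2, (if IsOrderedBond L ε φ x i then (1 : ℝ) else 0)
      ≤ ∑ _x : Torus L, ∑ _i : Fin 2, (1 : ℝ) := by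
        gcongr with x _ i
        split_ifs <;> norm_num
    _ = 2 * L ^ 2 := by
        simp only [Finset.sum_const, Finset.card_univ, Fintype.card_fin, Fintype.card_prod,
          ZMod.card, nsmul_eq_mul, Nat.cast_mul, Nat.cast_ofNat, mul_one]
        ring

lemma measurable_toyH : Measurable (toyH L ε) := by
  unfold toyH IsOrderedBond
  refine Measurable.neg (Finset.measurable_sum _ fun x _ => Finset.measurable_sum _ fun i _ => ?_)
  exact Measurable.ite (measurableSet_le (by fun_prop) measurable_const) measurable_const
    measurable_const

variable {β : ℝ}

lemma one_le_exp_neg_mul_toyH (hβ : 0 ≤ β) (φ : Config L) : 1 ≤ Real.exp (-β * toyH L ε φ) := by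
  refine Real.one_le_exp ?_
  nlinarith [neg_toyH_nonneg ε φ]

lemma exp_neg_mul_toyH_le (hβ : 0 ≤ β) (φ : Config L) :
    Real.exp (-β * toyH L ε φ) ≤ Real.exp (2 * β * L ^ 2) := by
  refine Real.exp_le_exp.2 ?_
  nlinarith [neg_toyH_le ε φ]

end Hamiltonian

section PartitionFunction

variable {L : ℕ} [NeZero L] {β : ℝ} (ε : ℝ)

lemma integrable_exp_neg_mul_toyH (hβ : 0 ≤ β) :
    Integrable (fun φ => Real.exp (-β * toyH L ε φ)) (toyMeasure L) :=
  Integrable.of_bound (((measurable_toyH ε).const_mul _).exp.aestronglyMeasurable)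
    (Real.exp (2 * β * L ^ 2)) (ae_of_all _ fun φ => by
      rw [Real.norm_of_nonneg (Real.exp_pos _).le]
      exact exp_neg_mul_toyH_le ε hβ φ)

lemma one_le_toyZ (hβ : 0 ≤ β) : 1 ≤ toyZ L β ε := by
  calc (1 : ℝ) = ∫ _φ, (1 : ℝ) ∂(toyMeasure L) := by simp
    _ ≤ toyZ L β ε := integral_mono (integrable_const 1) (integrable_exp_neg_mul_toyH ε hβ)
        fun φ => one_le_exp_neg_mul_toyH ε hβ φ

lemma toyZord_nonneg : 0 ≤ toyZord L β ε :=
  setIntegral_nonneg_of_ae (ae_of_all _ fun _ => (Real.exp_pos _).le)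

end PartitionFunction

lemma toyMeasure_allOrdered_le {L : ℕ} [NeZero L] (ε : ℝ) :
    toyMeasure L {φ | ∀ x i, IsOrderedBond L ε φ x i} ≤ ENNReal.ofReal ε ^ (L ^ 2 - 1) := by
  have hball (c : AddCircle (1 : ℝ)) :
      AddCircle.haarAddCircle {t : AddCircle (1 : ℝ) | ‖t - c‖ ≤ ε / 2} ≤ ENNReal.ofReal ε := by
    convert AddCircle.haarAddCircle_closedBall_le c (ε / 2) using 2
    · ext t; simp [dist_eq_norm]
    · ring
  have htree : {φ : Config L | ∀ x i, IsOrderedBond L ε φ x i} ⊆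
      {φ | ∀ x ∈ Finset.univ.erase 0, ‖φ x - φ (Torus.lexPred x)‖ ≤ ε / 2} := by
    intro φ hφ x _
    obtain ⟨i, hi⟩ := Torus.exists_lexPred_add_coordVec x
    have := hφ (Torus.lexPred x) i
    rwa [IsOrderedBond, hi, norm_sub_rev] at this
  calc _ ≤ _ := measure_mono htree
    _ ≤ _ := measure_pi_setOf_forall_rel_parent_le (measurableSet_setOf_norm_sub_le _) hball
          Torus.lexRank Torus.lexPred _ fun _ hx =>
            Torus.lexRank_lexPred_lt (Finset.ne_of_mem_erase hx)
    _ = _ := by rw [Torus.card_erase_zero]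

lemma toyZord_le {L : ℕ} [NeZero L] {β ε : ℝ} (hβ : 0 ≤ β) (hε : 0 ≤ ε) :
    toyZord L β ε ≤ Real.exp (2 * β * L ^ 2) * ε ^ (L ^ 2 - 1) := by
  have hμ : (toyMeasure L).real {φ | ∀ x i, IsOrderedBond L ε φ x i} ≤ ε ^ (L ^ 2 - 1) := by
    refine ENNReal.toReal_le_of_le_ofReal (by positivity) ?_
    rw [ENNReal.ofReal_pow hε]
    exact toyMeasure_allOrdered_le ε
  calc toyZord L β ε ≤ ‖toyZord L β ε‖ := Real.le_norm_self _
    _ ≤ Real.exp (2 * β * L ^ 2) * (toyMeasure L).real {φ | ∀ x i, IsOrderedBond L ε φ x i} :=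
        norm_setIntegral_le_of_norm_le_const (measure_lt_top _ _) fun φ _ => by
          rw [Real.norm_of_nonneg (Real.exp_pos _).le]
          exact exp_neg_mul_toyH_le ε hβ φ
    _ ≤ _ := by gcongr

lemma exp_mul_pow_rpow_inv {β ε : ℝ} (hε : 0 ≤ ε) {L : ℕ} (hL : L ≠ 0) :
    (Real.exp (2 * β * L ^ 2) * ε ^ (L ^ 2 - 1)) ^ (2 * (L : ℝ) ^ 2)⁻¹ =
      Real.exp β * ε ^ (((L : ℝ) ^ 2 - 1) / (2 * (L : ℝ) ^ 2)) := by
  have hL' : (L : ℝ) ≠ 0 := Nat.cast_ne_zero.2 hL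
  have hcast : ((L ^ 2 - 1 : ℕ) : ℝ) = (L : ℝ) ^ 2 - 1 := by
    rw [Nat.cast_sub (Nat.one_le_pow _ _ (Nat.pos_of_ne_zero hL))]
    push_cast
    ring
  rw [Real.mul_rpow (Real.exp_pos _).le (by positivity), ← Real.exp_mul,
    ← Real.rpow_natCast ε, ← Real.rpow_mul hε, hcast]
  congr 2
  field_simp

/-- `Z^{ord} ≤ exp(2βL²)·ε^{L²−1}` and the per-bond chessboard ratio
bound `(Z^{ord}/Z)^{1/(2L²)} ≤ exp(β)·ε^{(L²−1)/(2L²)}·(1−4ε)^{−1/4}`. -/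
theorem toy_Zord_upper_bound (L : ℕ) (hL : 2 ≤ L) (β ε : ℝ)
    (hβ : 0 ≤ β) (hε : 0 < ε) (hε' : ε < 1 / 4) :
    haveI : NeZero L := ⟨by omega⟩
    toyZord L β ε ≤ Real.exp (2 * β * L ^ 2) * ε ^ (L ^ 2 - 1) ∧
    (toyZord L β ε / toyZ L β ε) ^ ((2 * (L : ℝ) ^ 2)⁻¹) ≤
      Real.exp β * ε ^ (((L : ℝ) ^ 2 - 1) / (2 * (L : ℝ) ^ 2)) *
        (1 - 4 * ε) ^ (-(1 : ℝ) / 4) := by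
  have : NeZero L := ⟨by omega⟩
  have hZord := toyZord_le (L := L) hβ hε.le
  have hZ := one_le_toyZ (L := L) ε hβ
  have hZord₀ := toyZord_nonneg (L := L) (β := β) ε
  refine ⟨hZord, ?_⟩
  calc (toyZord L β ε / toyZ L β ε) ^ (2 * (L : ℝ) ^ 2)⁻¹
      ≤ (Real.exp (2 * β * L ^ 2) * ε ^ (L ^ 2 - 1)) ^ (2 * (L : ℝ) ^ 2)⁻¹ :=
        Real.rpow_le_rpow (div_nonneg hZord₀ (zero_le_one.trans hZ))
          ((div_le_self hZord₀ hZ).trans hZord) (by positivity)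
    _ = Real.exp β * ε ^ (((L : ℝ) ^ 2 - 1) / (2 * (L : ℝ) ^ 2)) :=
        exp_mul_pow_rpow_inv hε.le (NeZero.ne L)
    _ ≤ _ := le_mul_of_one_le_right (by positivity)
        (Real.one_le_rpow_of_pos_of_le_one_of_nonpos (by linarith) (by linarith) (by norm_num))
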